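/- arXiv:2301.09287 — 8 statements merged into one kernel-verified Lean document; each statement's English description precedes it below -/
import Mathlib

section
/- For any d > 0 and integer k ≥ 3, the function φ_{d,k}(α) = 1 − exp(−d·α^(k−1)) has at most three fixed points in the interval [0,1]. -/
noncomputable def phi (d : ℝ) (k : ℕ) (α : ℝ) : ℝ :=
  1 - Real.exp (-(d * α ^ (k - 1)))

private lemma psi_hasDeriv (f : ℕ) (x : ℝ) :
    HasDerivAt (fun α : ℝ => α ^ (f+1) * (1 - α))
      (((f:ℝ)+1) * x ^ f * (1 - x) + x ^ (f+1) * (-1)) x := by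
  have h1 : HasDerivAt (fun α : ℝ => α ^ (f+1)) (((f:ℝ)+1) * x ^ f) x := by
    simpa using hasDerivAt_pow (f+1) x
  have h2 : HasDerivAt (fun α : ℝ => 1 - α) (-1) x := by
    simpa using (hasDerivAt_id x).const_sub 1
  exact h1.mul h2

private lemma psi_strictMonoOn (f : ℕ) :
    StrictMonoOn (fun α : ℝ => α ^ (f+1) * (1 - α))
      (Set.Icc 0 (((f:ℝ)+1)/((f:ℝ)+2))) := by
  apply strictMonoOn_of_deriv_pos (convex_Icc _ _)
  · exact Continuous.continuousOn (by continuity)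
  · intro x hx
    rw [interior_Icc] at hx
    rw [(psi_hasDeriv f x).deriv]
    have hx0 : 0 < x := hx.1
    have hf2 : (0:ℝ) < (f:ℝ)+2 := by positivity
    have hfac : 0 < ((f:ℝ)+1) - ((f:ℝ)+2) * x := by
      have := hx.2
      rw [lt_div_iff₀ hf2] at this
      linarith
    have hpow : 0 < x ^ f := pow_pos hx0 f
    have key : 0 < x ^ f * (((f:ℝ)+1) - ((f:ℝ)+2)*x) := mul_pos hpow hfac
    have hxe : x ^ (f+1) = x ^ f * x := pow_succ x f
    nlinarith [key, hxe]

private lemma psi_strictAntiOn (f : ℕ) :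
    StrictAntiOn (fun α : ℝ => α ^ (f+1) * (1 - α))
      (Set.Icc (((f:ℝ)+1)/((f:ℝ)+2)) 1) := by
  apply strictAntiOn_of_deriv_neg (convex_Icc _ _)
  · exact Continuous.continuousOn (by continuity)
  · intro x hx
    rw [interior_Icc] at hx
    rw [(psi_hasDeriv f x).deriv]
    have hf2 : (0:ℝ) < (f:ℝ)+2 := by positivity
    have hm0 : (0:ℝ) < ((f:ℝ)+1)/((f:ℝ)+2) := by positivity
    have hx0 : 0 < x := lt_trans hm0 hx.1
    have hfac : ((f:ℝ)+1) - ((f:ℝ)+2) * x < 0 := by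
      have := hx.1
      rw [div_lt_iff₀ hf2] at this
      linarith
    have hpow : 0 < x ^ f := pow_pos hx0 f
    have key : x ^ f * (((f:ℝ)+1) - ((f:ℝ)+2)*x) < 0 :=
      mul_neg_of_pos_of_neg hpow hfac
    have hxe : x ^ (f+1) = x ^ f * x := pow_succ x f
    nlinarith [key, hxe]

private lemma psi_no_three (f : ℕ) {p q r : ℝ} (hp : p ∈ Set.Ioo (0:ℝ) 1)
    (hq : q ∈ Set.Ioo (0:ℝ) 1) (hr : r ∈ Set.Ioo (0:ℝ) 1)
    (hpq : p < q) (hqr : q < r)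
    (e1 : p ^ (f+1) * (1 - p) = q ^ (f+1) * (1 - q))
    (e2 : q ^ (f+1) * (1 - q) = r ^ (f+1) * (1 - r)) : False := by
  rcases le_or_gt q (((f:ℝ)+1)/((f:ℝ)+2)) with h | h
  · have := psi_strictMonoOn f (Set.mem_Icc.2 ⟨hp.1.le, hpq.le.trans h⟩)
      (Set.mem_Icc.2 ⟨hq.1.le, h⟩) hpq
    simp only [] at this
    linarith
  · have := psi_strictAntiOn f (Set.mem_Icc.2 ⟨h.le, hq.2.le⟩)
      (Set.mem_Icc.2 ⟨(h.trans hqr).le, hr.2.le⟩) hqr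
    simp only [] at this
    linarith

private lemma h_hasDeriv (d : ℝ) (f : ℕ) {x : ℝ} (hx : x < 1) :
    HasDerivAt (fun α : ℝ => d * α ^ (f+2) + Real.log (1 - α))
      (d * (((f:ℝ)+2) * x ^ (f+1)) + (-1) / (1 - x)) x := by
  have h1 : HasDerivAt (fun α : ℝ => α ^ (f+2)) (((f:ℝ)+2) * x ^ (f+1)) x := by
    have := hasDerivAt_pow (f+2) x
    push_cast at this
    convert this using 2
  have h2 : HasDerivAt (fun α : ℝ => 1 - α) (-1) x := by
    simpa using (hasDerivAt_id x).const_sub 1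
  have h3 : HasDerivAt (fun α : ℝ => Real.log (1 - α)) ((-1) / (1 - x)) x :=
    h2.log (by intro hc; linarith [sub_eq_zero.1 hc] )
  exact (h1.const_mul d).add h3

private lemma rolle_step (d : ℝ) (f : ℕ) {a b : ℝ} (hab : a < b) (hb1 : b < 1)
    (hha : d * a ^ (f+2) + Real.log (1 - a) = 0)
    (hhb : d * b ^ (f+2) + Real.log (1 - b) = 0) :
    ∃ c ∈ Set.Ioo a b, d * (((f:ℝ)+2) * c ^ (f+1)) * (1 - c) = 1 := by
  obtain ⟨c, hc, hc0⟩ := exists_hasDerivAt_eq_zero hab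
    (fun x hx => (h_hasDeriv d f (lt_of_le_of_lt hx.2 hb1)).continuousAt.continuousWithinAt)
    (by rw [hha, hhb])
    (fun x hx => h_hasDeriv d f (lt_trans hx.2 hb1))
  refine ⟨c, hc, ?_⟩
  have h1c : (1:ℝ) - c ≠ 0 := by
    have : c < 1 := lt_trans hc.2 hb1
    intro hcon; linarith [sub_eq_zero.1 hcon]
  field_simp at hc0
  linarith [hc0]

private lemma ordered_contra (d : ℝ) (hd : 0 < d) (f : ℕ) {x y z : ℝ}
    (hx : x ∈ Set.Ioo (0:ℝ) 1) (hy : y ∈ Set.Ioo (0:ℝ) 1) (hz : z ∈ Set.Ioo (0:ℝ) 1)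
    (hxy : x < y) (hyz : y < z)
    (Hx : d * x ^ (f+2) + Real.log (1 - x) = 0)
    (Hy : d * y ^ (f+2) + Real.log (1 - y) = 0)
    (Hz : d * z ^ (f+2) + Real.log (1 - z) = 0) : False := by
  have H0 : d * (0:ℝ) ^ (f+2) + Real.log (1 - 0) = 0 := by simp
  obtain ⟨p, hp, Pp⟩ := rolle_step d f hx.1 hx.2 H0 Hx
  obtain ⟨q, hq, Pq⟩ := rolle_step d f hxy hy.2 Hx Hy
  obtain ⟨r, hr, Pr⟩ := rolle_step d f hyz hz.2 Hy Hz
  have hdn : (0:ℝ) < d * ((f:ℝ)+2) := by positivity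
  have e1 : p ^ (f+1) * (1 - p) = q ^ (f+1) * (1 - q) := by
    have h' : (d * ((f:ℝ)+2)) * (p ^ (f+1) * (1 - p))
        = (d * ((f:ℝ)+2)) * (q ^ (f+1) * (1 - q)) := by
      linear_combination Pp - Pq
    exact mul_left_cancel₀ hdn.ne' h'
  have e2 : q ^ (f+1) * (1 - q) = r ^ (f+1) * (1 - r) := by
    have h' : (d * ((f:ℝ)+2)) * (q ^ (f+1) * (1 - q))
        = (d * ((f:ℝ)+2)) * (r ^ (f+1) * (1 - r)) := by
      linear_combination Pq - Pr
    exact mul_left_cancel₀ hdn.ne' h'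
  exact psi_no_three f ⟨hp.1, hp.2.trans hx.2⟩ ⟨hx.1.trans hq.1, hq.2.trans hy.2⟩
    ⟨hy.1.trans hr.1, hr.2.trans hz.2⟩ (hp.2.trans hq.1) (hq.2.trans hr.1) e1 e2

private lemma fixed_zero (d : ℝ) (k : ℕ) {α : ℝ} (hα1 : α < 1)
    (h : phi d k α = α) : d * α ^ (k-1) + Real.log (1 - α) = 0 := by
  unfold phi at h
  have h2 : Real.exp (-(d * α ^ (k-1))) = 1 - α := by linarith
  have h3 : -(d * α ^ (k-1)) = Real.log (1 - α) := by
    rw [← h2, Real.log_exp]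
  linarith

private lemma not_fixed_one (d : ℝ) (hd : 0 < d) (k : ℕ) : phi d k 1 ≠ 1 := by
  unfold phi
  intro h
  have : Real.exp (-(d * 1 ^ (k-1))) = 0 := by linarith
  exact (Real.exp_pos _).ne' this

/-- For `d > 0` and `k ≥ 3`, the function `φ_{d,k}` has at most three fixed points in `[0,1]`. -/
theorem phi_at_most_three_fixed_points (d : ℝ) (hd : 0 < d) (k : ℕ) (hk : 3 ≤ k) :
    ∃ a b c : ℝ, ∀ α ∈ Set.Icc (0:ℝ) 1, phi d k α = α → α = a ∨ α = b ∨ α = c := by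
  by_contra hcon
  push_neg at hcon
  obtain ⟨x, hxI, hxfp, hx0, -, -⟩ := hcon 0 0 0
  obtain ⟨y, hyI, hyfp, hy0, hyx, -⟩ := hcon 0 x x
  obtain ⟨z, hzI, hzfp, hz0, hzx, hzy⟩ := hcon 0 x y
  set f : ℕ := k - 3 with hf
  have hk1 : k - 1 = f + 2 := by omega
  have mem : ∀ w : ℝ, w ∈ Set.Icc (0:ℝ) 1 → phi d k w = w → w ≠ 0 →
      w ∈ Set.Ioo (0:ℝ) 1 ∧ d * w ^ (f+2) + Real.log (1 - w) = 0 := by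
    intro w hwI hwfp hw0
    have hw1 : w ≠ 1 := by
      intro hw; exact not_fixed_one d hd k (hw ▸ hwfp)
    have hmem : w ∈ Set.Ioo (0:ℝ) 1 :=
      ⟨lt_of_le_of_ne hwI.1 (Ne.symm hw0), lt_of_le_of_ne hwI.2 hw1⟩
    have := fixed_zero d k hmem.2 hwfp
    rw [hk1] at this
    exact ⟨hmem, this⟩
  obtain ⟨hxm, Hx⟩ := mem x hxI hxfp hx0
  obtain ⟨hym, Hy⟩ := mem y hyI hyfp hy0
  obtain ⟨hzm, Hz⟩ := mem z hzI hzfp hz0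
  rcases lt_trichotomy x y with h1 | h1 | h1
  · rcases lt_trichotomy y z with h2 | h2 | h2
    · exact ordered_contra d hd f hxm hym hzm h1 h2 Hx Hy Hz
    · exact hzy h2.symm
    · rcases lt_trichotomy x z with h3 | h3 | h3
      · exact ordered_contra d hd f hxm hzm hym h3 h2 Hx Hz Hy
      · exact hzx h3.symm
      · exact ordered_contra d hd f hzm hxm hym h3 h1 Hz Hx Hy
  · exact hyx h1.symm
  · rcases lt_trichotomy x z with h3 | h3 | h3
    · exact ordered_contra d hd f hym hxm hzm h1 h3 Hy Hx Hz
    · exact hzx h3.symm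
    · rcases lt_trichotomy y z with h2 | h2 | h2
      · exact ordered_contra d hd f hym hzm hxm h2 h3 Hy Hz Hx
      · exact hzy h2.symm
      · exact ordered_contra d hd f hzm hym hxm h2 h1 Hz Hy Hx
end

section
/- Let A be an M×N matrix over 𝔽_q and let A' be obtained from A by adding one row. If j and j' are two distinct column indices that are frozen in A' but not frozen in A, then the set {j, j'} is a proper relation of A. -/
/-- `J` is a relation of `A`: some linear combination of the rows of `A` has non-empty
support contained in `J`. -/
def IsRelation {F : Type*} [Field F] {M N : ℕ}
    (A : Matrix (Fin M) (Fin N) F) (J : Set (Fin N)) : Prop :=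
  ∃ y : Fin M → F, {i | Matrix.vecMul y A i ≠ 0}.Nonempty ∧ {i | Matrix.vecMul y A i ≠ 0} ⊆ J

/-- Column `j` is frozen in `A`: `σ j = 0` for all `σ ∈ ker A`. -/
def Frozen {F : Type*} [Field F] {M N : ℕ}
    (A : Matrix (Fin M) (Fin N) F) (j : Fin N) : Prop :=
  ∀ σ : Fin N → F, A.mulVec σ = 0 → σ j = 0

def FrozenSet {F : Type*} [Field F] {M N : ℕ}
    (A : Matrix (Fin M) (Fin N) F) : Set (Fin N) :=
  {j | Frozen A j}

/-- `J` is a proper relation of `A`: `J \ F(A)` is a relation of `A`. -/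
def IsProperRelation {F : Type*} [Field F] {M N : ℕ}
    (A : Matrix (Fin M) (Fin N) F) (J : Set (Fin N)) : Prop :=
  IsRelation A (J \ FrozenSet A)

open Matrix

lemma mem_rowSpace {F : Type*} [Field F] {M N : ℕ} (A : Matrix (Fin M) (Fin N) F)
    (v : Fin N → F) (h : ∀ σ : Fin N → F, A.mulVec σ = 0 → v ⬝ᵥ σ = 0) :
    ∃ y : Fin M → F, Matrix.vecMul y A = v := by
  let L : Fin M → (Fin N → F) →ₗ[F] F := fun i => (LinearMap.proj i).comp A.mulVecLin
  let K : (Fin N → F) →ₗ[F] F :=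
    { toFun := fun σ => v ⬝ᵥ σ
      map_add' := fun x y => dotProduct_add v x y
      map_smul' := fun c x => by simp [dotProduct_smul] }
  have hK : K ∈ Submodule.span F (Set.range L) := by
    apply mem_span_of_iInf_ker_le_ker
    intro σ hσ
    simp only [Submodule.mem_iInf, LinearMap.mem_ker, LinearMap.comp_apply,
      LinearMap.proj_apply, Matrix.mulVecLin_apply, L] at hσ
    exact h σ (funext hσ)
  obtain ⟨c, hc⟩ := (Submodule.mem_span_range_iff_exists_fun F).1 hK
  refine ⟨c, funext fun k => ?_⟩
  have := congrFun (congrArg DFunLike.coe hc) (Pi.single k 1)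
  simp only [LinearMap.coe_sum, Finset.sum_apply, LinearMap.smul_apply,
    LinearMap.comp_apply, LinearMap.proj_apply, Matrix.mulVecLin_apply,
    Matrix.mulVec_single, smul_eq_mul, mul_one, LinearMap.coe_mk, AddHom.coe_mk,
    dotProduct_single, K, L] at this
  simpa [Matrix.vecMul, dotProduct] using this


/-- If `j ≠ j'` are frozen in `A'` (obtained from `A` by adding one row) but not in `A`,
then `{j, j'}` is a proper relation of `A`. -/
theorem newly_frozen_pair_proper_relation {F : Type*} [Field F] [Fintype F]
    {M N : ℕ} (A : Matrix (Fin M) (Fin N) F) (A' : Matrix (Fin (M + 1)) (Fin N) F)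
    (hrow : ∀ i : Fin M, A' i.castSucc = A i)
    (j j' : Fin N) (hne : j ≠ j')
    (hj : Frozen A' j) (hj' : Frozen A' j')
    (hnj : ¬ Frozen A j) (hnj' : ¬ Frozen A j') :
    IsProperRelation A {j, j'} := by
  simp only [Frozen, not_forall] at hnj hnj'
  obtain ⟨σ, hσ0, hσj⟩ := hnj
  obtain ⟨τ, hτ0, hτj'⟩ := hnj'
  set r : Fin N → F := A' (Fin.last M) with hr
  have hker : ∀ x : Fin N → F, A.mulVec x = 0 → r ⬝ᵥ x = 0 → A'.mulVec x = 0 := by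
    intro x h1 h2
    funext i
    refine Fin.lastCases ?_ (fun k => ?_) i
    · simpa [Matrix.mulVec, ← hr] using h2
    · have := congrFun h1 k
      simpa [Matrix.mulVec, hrow k] using this
  have ha : r ⬝ᵥ σ ≠ 0 := fun h => hσj (hj σ (hker σ hσ0 h))
  have hb : r ⬝ᵥ τ ≠ 0 := fun h => hτj' (hj' τ (hker τ hτ0 h))
  set a := r ⬝ᵥ σ
  set b := r ⬝ᵥ τ
  have key : ∀ x : Fin N → F, A.mulVec x = 0 →
      a * x j = (r ⬝ᵥ x) * σ j ∧ b * x j' = (r ⬝ᵥ x) * τ j' := by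
    intro x hx
    constructor
    · have h1 : A.mulVec (a • x - (r ⬝ᵥ x) • σ) = 0 := by
        simp [Matrix.mulVec_sub, Matrix.mulVec_smul, hx, hσ0]
      have h2 : r ⬝ᵥ (a • x - (r ⬝ᵥ x) • σ) = 0 := by
        simp [dotProduct_sub, dotProduct_smul, smul_eq_mul]; ring
      have := hj _ (hker _ h1 h2)
      simp only [Pi.sub_apply, Pi.smul_apply, smul_eq_mul] at this
      linear_combination this
    · have h1 : A.mulVec (b • x - (r ⬝ᵥ x) • τ) = 0 := by
        simp [Matrix.mulVec_sub, Matrix.mulVec_smul, hx, hτ0]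
      have h2 : r ⬝ᵥ (b • x - (r ⬝ᵥ x) • τ) = 0 := by
        simp [dotProduct_sub, dotProduct_smul, smul_eq_mul]; ring
      have := hj' _ (hker _ h1 h2)
      simp only [Pi.sub_apply, Pi.smul_apply, smul_eq_mul] at this
      linear_combination this
  set v : Fin N → F := Pi.single j (a * τ j') - Pi.single j' (b * σ j) with hv
  obtain ⟨y, hy⟩ := mem_rowSpace A v (by
    intro x hx
    obtain ⟨k1, k2⟩ := key x hx
    have habv : a * b * (v ⬝ᵥ x) = 0 := by
      have hvx : v ⬝ᵥ x = (a * τ j') * x j - (b * σ j) * x j' := by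
        simp [hv, sub_dotProduct, single_dotProduct]
      rw [hvx]
      linear_combination (a * b * τ j') * k1 - (a * b * σ j) * k2
    by_contra h
    exact mul_ne_zero (mul_ne_zero ha hb) h habv)
  refine ⟨y, ?_, ?_⟩
  · refine ⟨j, ?_⟩
    simp only [Set.mem_setOf_eq, hy, hv, Pi.sub_apply]
    rw [Pi.single_eq_same, Pi.single_eq_of_ne hne]
    simpa using mul_ne_zero ha hτj'
  · intro i hi
    simp only [Set.mem_setOf_eq, hy] at hi
    have : i = j ∨ i = j' := by
      by_contra h
      push_neg at h
      simp [hv, Pi.single_eq_of_ne h.1, Pi.single_eq_of_ne h.2] at hi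
    constructor
    · rcases this with h | h <;> simp [h]
    · rcases this with h | h <;> subst h <;> intro hmem <;>
        [exact hσj (hmem σ hσ0); exact hτj' (hmem τ hτ0)]
end

section
/- Let A be an M×N matrix over 𝔽_q and A' be obtained from A by adding a single row. If A has fewer than δ·C(N,2) proper relations of size two, then |F(A') \ F(A)| < √(2δ)·N + 2 (in particular, for any δ' > 0 one can choose δ > 0 so that |F(A') \ F(A)| < δ'·N for large N). -/
lemma frozen_iff {F : Type*} [Field F] {M N : ℕ}
    (A : Matrix (Fin M) (Fin N) F) (j : Fin N) :
    Frozen A j ↔ (Pi.single j 1 : Fin N → F) ∈ LinearMap.range A.vecMulLinear := by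
  constructor
  · intro hfr
    by_contra hmem
    obtain ⟨f, hf0, hfbot⟩ := Submodule.exists_dual_map_eq_bot_of_notMem hmem inferInstance
    set σ : Fin N → F := fun i => f (Pi.single i 1) with hσ
    have hker : A.mulVec σ = 0 := by
      funext i
      have hAi : (A i : Fin N → F) ∈ LinearMap.range A.vecMulLinear :=
        ⟨Pi.single i 1, by simp [Matrix.vecMulLinear_apply, Matrix.single_one_vecMul]; rfl⟩
      have hfAi : f (A i) = 0 := by
        have : f (A i) ∈ (LinearMap.range A.vecMulLinear).map f :=
          Submodule.mem_map_of_mem hAi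
        rw [hfbot] at this
        simpa using this
      calc A.mulVec σ i = ∑ k, A i k * f (Pi.single k 1) := rfl
        _ = ∑ k, f (A i k • (Pi.single k 1 : Fin N → F)) := by
            simp [map_smul, smul_eq_mul]
        _ = f (∑ k, A i k • (Pi.single k 1 : Fin N → F)) := by rw [map_sum]
        _ = f (A i) := by
            congr 1
            funext l
            simp [Pi.single_apply, Finset.sum_ite_eq']
        _ = 0 := hfAi
    have := hfr σ hker
    simp only [hσ] at this
    exact hf0 this
  · rintro ⟨y, hy⟩ σ hσ
    have : dotProduct (Matrix.vecMul y A) σ = 0 := by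
      rw [← Matrix.dotProduct_mulVec, hσ, dotProduct_zero]
    rw [Matrix.vecMulLinear_apply] at hy
    rw [hy] at this
    simpa using this

lemma decomp {F : Type*} [Field F] {M N : ℕ}
    (A : Matrix (Fin M) (Fin N) F) (A' : Matrix (Fin (M + 1)) (Fin N) F)
    (hrow : ∀ i : Fin M, A' i.castSucc = A i) {j : Fin N}
    (hj : j ∈ FrozenSet A' \ FrozenSet A) :
    ∃ u : Fin M → F, ∃ c : F, c ≠ 0 ∧
      Matrix.vecMul u A = (Pi.single j 1 : Fin N → F) - c • A' (Fin.last M) := by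
  obtain ⟨hj1, hj2⟩ := hj
  obtain ⟨y, hy⟩ := (frozen_iff A' j).mp hj1
  rw [Matrix.vecMulLinear_apply] at hy
  refine ⟨fun i => y i.castSucc, y (Fin.last M), ?_, ?_⟩
  · intro hc
    apply hj2
    show Frozen A j
    rw [frozen_iff]
    refine ⟨fun i => y i.castSucc, ?_⟩
    rw [Matrix.vecMulLinear_apply]
    funext k
    have := congrFun hy k
    simp only [Matrix.vecMul, dotProduct] at this ⊢
    rw [Fin.sum_univ_castSucc, hc, zero_mul, add_zero] at this
    rw [← this]
    exact Finset.sum_congr rfl fun i _ => by rw [hrow]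
  · funext k
    have := congrFun hy k
    simp only [Matrix.vecMul, dotProduct] at this ⊢
    rw [Fin.sum_univ_castSucc] at this
    simp only [Pi.sub_apply, Pi.smul_apply, smul_eq_mul]
    have hsum : ∑ i : Fin M, y i.castSucc * A' i.castSucc k
        = ∑ i : Fin M, y i.castSucc * A i k :=
      Finset.sum_congr rfl fun i _ => by rw [hrow]
    rw [hsum] at this
    linear_combination this

lemma pair_proper {F : Type*} [Field F] {M N : ℕ}
    (A : Matrix (Fin M) (Fin N) F) (A' : Matrix (Fin (M + 1)) (Fin N) F)
    (hrow : ∀ i : Fin M, A' i.castSucc = A i) {j₁ j₂ : Fin N}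
    (h1 : j₁ ∈ FrozenSet A' \ FrozenSet A) (h2 : j₂ ∈ FrozenSet A' \ FrozenSet A)
    (hne : j₁ ≠ j₂) :
    IsProperRelation A (({j₁, j₂} : Finset (Fin N)) : Set (Fin N)) := by
  obtain ⟨u₁, c₁, hc₁, he₁⟩ := decomp A A' hrow h1
  obtain ⟨u₂, c₂, hc₂, he₂⟩ := decomp A A' hrow h2
  refine ⟨c₂ • u₁ - c₁ • u₂, ?_, ?_⟩
  · have hval : Matrix.vecMul (c₂ • u₁ - c₁ • u₂) A
        = c₂ • (Pi.single j₁ 1 : Fin N → F) - c₁ • (Pi.single j₂ 1 : Fin N → F) := by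
      rw [Matrix.sub_vecMul, Matrix.smul_vecMul, Matrix.smul_vecMul, he₁, he₂]
      funext i
      simp only [Pi.sub_apply, Pi.smul_apply, smul_eq_mul]
      ring
    refine ⟨j₁, ?_⟩
    show Matrix.vecMul (c₂ • u₁ - c₁ • u₂) A j₁ ≠ 0
    rw [hval]
    simp [Pi.single_apply, hne.symm, hc₂]
  · intro i hi
    have hval : Matrix.vecMul (c₂ • u₁ - c₁ • u₂) A
        = c₂ • (Pi.single j₁ 1 : Fin N → F) - c₁ • (Pi.single j₂ 1 : Fin N → F) := by
      rw [Matrix.sub_vecMul, Matrix.smul_vecMul, Matrix.smul_vecMul, he₁, he₂]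
      funext l
      simp only [Pi.sub_apply, Pi.smul_apply, smul_eq_mul]
      ring
    simp only [Set.mem_setOf_eq, hval] at hi
    have hior : i = j₁ ∨ i = j₂ := by
      by_contra hcon
      push_neg at hcon
      simp [Pi.single_apply, hcon.1, hcon.2] at hi
    constructor
    · simp only [Finset.coe_insert, Finset.coe_singleton, Set.mem_insert_iff,
        Set.mem_singleton_iff]
      exact hior
    · rcases hior with rfl | rfl
      · exact h1.2
      · exact h2.2

/-- If `A` has fewer than `δ·C(N,2)` proper relations of size two, then after adding one
row the number of newly frozen indices is less than `√(2δ)·N + 2`. -/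
theorem few_new_frozen_of_few_pair_relations {F : Type*} [Field F] [Fintype F]
    {M N : ℕ} (A : Matrix (Fin M) (Fin N) F) (A' : Matrix (Fin (M + 1)) (Fin N) F)
    (hrow : ∀ i : Fin M, A' i.castSucc = A i) (δ : ℝ) (hδ : 0 < δ)
    (hfew : ((({J : Finset (Fin N) | J.card = 2 ∧ IsProperRelation A (J : Set (Fin N))}).ncard : ℝ))
      < δ * (N.choose 2 : ℝ)) :
    ((FrozenSet A' \ FrozenSet A).ncard : ℝ) < Real.sqrt (2 * δ) * N + 2 := by
  classical
  set S : Set (Fin N) := FrozenSet A' \ FrozenSet A with hS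
  have hfin : S.Finite := Set.toFinite S
  set S' : Finset (Fin N) := hfin.toFinset with hS'
  set T : Set (Finset (Fin N)) :=
    {J : Finset (Fin N) | J.card = 2 ∧ IsProperRelation A (J : Set (Fin N))} with hT
  have hsub : ↑(S'.powersetCard 2) ⊆ T := by
    intro p hp
    rw [Finset.mem_coe, Finset.mem_powersetCard] at hp
    obtain ⟨hpS, hcard⟩ := hp
    obtain ⟨a, b, hab, rfl⟩ := Finset.card_eq_two.mp hcard
    have ha : a ∈ S := hfin.mem_toFinset.mp (hpS (by simp))
    have hb : b ∈ S := hfin.mem_toFinset.mp (hpS (by simp))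
    exact ⟨hcard, pair_proper A A' hrow ha hb hab⟩
  have hcount : ((S'.card.choose 2 : ℕ) : ℝ) ≤ (T.ncard : ℝ) := by
    have h1 : S'.card.choose 2 = (S'.powersetCard 2).card :=
      (Finset.card_powersetCard 2 S').symm
    have h2 : (↑(S'.powersetCard 2) : Set (Finset (Fin N))).ncard ≤ T.ncard :=
      Set.ncard_le_ncard hsub (Set.toFinite T)
    rw [Set.ncard_coe_finset] at h2
    exact_mod_cast h1 ▸ h2
  have hkcard : S.ncard = S'.card := by
    rw [hS', Set.ncard_eq_toFinset_card S hfin]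
  set k := S.ncard with hk
  have h2 : ((k.choose 2 : ℕ) : ℝ) < δ * (N.choose 2 : ℝ) := by
    rw [hkcard]; exact lt_of_le_of_lt hcount hfew
  rw [Nat.cast_choose_two, Nat.cast_choose_two] at h2
  set s := Real.sqrt (2 * δ) with hsdef
  have hs2 : s ^ 2 = 2 * δ := Real.sq_sqrt (by positivity)
  have hs0 : 0 ≤ s := Real.sqrt_nonneg _
  have hN0 : (0 : ℝ) ≤ N := Nat.cast_nonneg N
  have hsN : 0 ≤ s * N := mul_nonneg hs0 hN0
  rcases le_or_gt ((k : ℝ)) 1 with h | h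
  · linarith
  · have hk2 : (2 : ℝ) ≤ (k : ℝ) := by
      have : 2 ≤ k := by exact_mod_cast Nat.succ_le_of_lt (by exact_mod_cast h)
      exact_mod_cast this
    by_contra hcon
    push_neg at hcon
    have p1 : 0 ≤ ((k : ℝ) - s * N - 2) := by linarith
    have p2 : 0 ≤ ((k : ℝ) - 1) := by linarith
    have p3 : 0 ≤ s * N + 2 := by linarith
    nlinarith [mul_nonneg p1 p2, mul_nonneg p3 p1, mul_nonneg (mul_nonneg hδ.le hN0) hN0,
      mul_nonneg hδ.le hN0, hsN, hs2]
end

section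
/- Let A' be obtained from an M×N matrix A over 𝔽_q by adding one row, and suppose I', I'' ⊆ [N] are disjoint sets that are proper relations of A' but not of A, witnessed by vectors y, z ∈ 𝔽_q^{M+1} with non-empty supports supp(yᵀA') ⊆ I' \ F(A') and supp(zᵀA') ⊆ I'' \ F(A') and y_{M+1} ≠ 0 ≠ z_{M+1}. Then I' ∪ I'' is a proper relation of A. -/
/-- Two disjoint proper relations of `A'` (not relations of `A`), witnessed by row
combinations with non-zero last coordinate, merge into a proper relation of `A`. -/
theorem union_proper_relation {F : Type*} [Field F] [Fintype F]
    {M N : ℕ} (A : Matrix (Fin M) (Fin N) F) (A' : Matrix (Fin (M + 1)) (Fin N) F)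
    (hrow : ∀ i : Fin M, A' i.castSucc = A i)
    (I' I'' : Set (Fin N)) (hdisj : Disjoint I' I'')
    (y z : Fin (M + 1) → F)
    (hy1 : {i | Matrix.vecMul y A' i ≠ 0}.Nonempty)
    (hy2 : {i | Matrix.vecMul y A' i ≠ 0} ⊆ I' \ FrozenSet A')
    (hz1 : {i | Matrix.vecMul z A' i ≠ 0}.Nonempty)
    (hz2 : {i | Matrix.vecMul z A' i ≠ 0} ⊆ I'' \ FrozenSet A')
    (hyM : y (Fin.last M) ≠ 0) (hzM : z (Fin.last M) ≠ 0) :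
    IsProperRelation A (I' ∪ I'') := by
  classical
  set w : Fin (M + 1) → F := fun i => z (Fin.last M) * y i - y (Fin.last M) * z i with hw
  set w' : Fin M → F := fun i => w i.castSucc with hw'
  -- pointwise value of vecMul w A'
  have hlin : ∀ i, Matrix.vecMul w A' i
      = z (Fin.last M) * Matrix.vecMul y A' i - y (Fin.last M) * Matrix.vecMul z A' i := by
    intro i
    simp only [Matrix.vecMul, dotProduct, hw, sub_mul, mul_assoc,
      Finset.sum_sub_distrib, Finset.mul_sum]
  have hrestrict : ∀ i, Matrix.vecMul w' A i = Matrix.vecMul w A' i := by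
    intro i
    have hlast : w (Fin.last M) = 0 := by simp [hw, mul_comm]
    simp only [Matrix.vecMul, dotProduct]
    rw [Fin.sum_univ_castSucc, hlast, zero_mul, add_zero]
    refine Finset.sum_congr rfl fun k _ => ?_
    rw [hw', hrow k]
  -- supports of y and z combos are disjoint
  have hkey : ∀ i, Matrix.vecMul y A' i ≠ 0 → Matrix.vecMul z A' i = 0 := by
    intro i hi
    by_contra hzi
    exact hdisj.ne_of_mem (hy2 hi).1 (hz2 hzi).1 rfl
  -- frozen monotonicity
  have hfro : FrozenSet A ⊆ FrozenSet A' := by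
    intro j hj σ hσ
    refine hj σ ?_
    funext k
    have := congrFun hσ k.castSucc
    simpa [Matrix.mulVec, dotProduct, hrow k] using this
  refine ⟨w', ?_, ?_⟩
  · obtain ⟨i, hi⟩ := hy1
    refine ⟨i, ?_⟩
    simp only [Set.mem_setOf_eq, hrestrict, hlin, hkey i hi, mul_zero, sub_zero]
    exact mul_ne_zero hzM hi
  · intro i hi
    simp only [Set.mem_setOf_eq, hrestrict, hlin] at hi
    have : Matrix.vecMul y A' i ≠ 0 ∨ Matrix.vecMul z A' i ≠ 0 := by
      by_contra h
      push_neg at h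
      simp [h.1, h.2] at hi
    rcases this with h | h
    · exact ⟨Or.inl (hy2 h).1, fun hf => (hy2 h).2 (hfro hf)⟩
    · exact ⟨Or.inr (hz2 h).1, fun hf => (hz2 h).2 (hfro hf)⟩
end

section
/- Let A be an M×N matrix, B an M'×N matrix, and C an M'×N' matrix over a field. Let I ⊆ [N] be the set of non-zero columns of B, and let B₀ be obtained from B by zeroing out every column i ∈ I that is frozen in A. If I is not a proper relation of A, then the nullity of the block matrix [[A, 0],[B, C]] equals nul(A) + N' − rank(B₀ C). -/
open scoped Classical

/-- Nullity of a matrix: the dimension of its kernel. -/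
noncomputable def nulMat {F : Type*} [Field F] {m n : Type*} [Fintype m] [Fintype n]
    (A : Matrix m n F) : ℕ :=
  Module.finrank F (LinearMap.ker A.mulVecLin)

section Helpers

variable {F : Type*} [Field F]

/-- A functional vanishing on the kernel of `mulVec` factors through `mulVec`. -/
lemma factor_through_mulVec {M N : ℕ} (A : Matrix (Fin M) (Fin N) F)
    (g : (Fin N → F) →ₗ[F] F) (hg : LinearMap.ker A.mulVecLin ≤ LinearMap.ker g) :
    ∃ h : (Fin M → F) →ₗ[F] F, ∀ σ, g σ = h (A.mulVec σ) := by
  obtain ⟨h, hh⟩ := LinearMap.exists_extend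
      (((LinearMap.ker A.mulVecLin).liftQ g hg).comp
        (A.mulVecLin.quotKerEquivRange).symm.toLinearMap)
  refine ⟨h, fun σ => ?_⟩
  have h1 := congrArg (fun f => f ⟨A.mulVecLin σ, LinearMap.mem_range_self _ σ⟩) hh
  simp only [LinearMap.comp_apply, Submodule.coe_subtype, LinearEquiv.coe_coe,
    LinearMap.quotKerEquivRange_symm_apply_image, Submodule.mkQ_apply,
    Submodule.liftQ_apply] at h1
  exact h1.symm

lemma exists_vecMul_of_dot {M N : ℕ} (A : Matrix (Fin M) (Fin N) F) (r : Fin N → F)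
    (hr : ∀ σ : Fin N → F, A.mulVec σ = 0 → ∑ j, σ j * r j = 0) :
    ∃ y : Fin M → F, r = Matrix.vecMul y A := by
  let g : (Fin N → F) →ₗ[F] F :=
    { toFun := fun σ => ∑ j, σ j * r j
      map_add' := fun a b => by simp [add_mul, Finset.sum_add_distrib]
      map_smul' := fun c a => by simp [Finset.mul_sum, mul_assoc] }
  obtain ⟨h, hh⟩ := factor_through_mulVec A g (fun σ hσ => by
    have : A.mulVec σ = 0 := hσ
    exact hr σ this)
  refine ⟨fun i => h (Pi.single i 1), ?_⟩
  funext j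
  have h1 : r j = g (Pi.single j 1) := by
    simp [g, Pi.single_apply, ite_mul]
  have hstd : ∀ i : Fin M, (fun k => if i = k then (1 : F) else 0) = (Pi.single i 1 : Fin M → F) :=
    fun i => funext fun k => by simp [Pi.single_apply, eq_comm]
  rw [h1, hh, Matrix.mulVec_single, LinearMap.pi_apply_eq_sum_univ h]
  simp only [hstd, smul_eq_mul, mul_one]
  simp [Matrix.vecMul, dotProduct, mul_comm]

lemma frozen_mem_rowspace {M N : ℕ} (A : Matrix (Fin M) (Fin N) F) {j : Fin N}
    (hj : Frozen A j) :
    ∃ y : Fin M → F, (Pi.single j 1 : Fin N → F) = Matrix.vecMul y A := by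
  apply exists_vecMul_of_dot
  intro σ hσ
  have := hj σ hσ
  simpa [Pi.single_apply, mul_ite] using this

lemma key_vanish {M N M' : ℕ} (A : Matrix (Fin M) (Fin N) F) (B : Matrix (Fin M') (Fin N) F)
    (hI : ¬ IsProperRelation A {j | ∃ i, B i j ≠ 0})
    (f : (Fin M' → F) →ₗ[F] F)
    (hf : ∀ σ : Fin N → F, A.mulVec σ = 0 → f (B.mulVec σ) = 0)
    {j : Fin N} (hj : ¬ Frozen A j) : f (fun i => B i j) = 0 := by
  by_contra hne
  set r : Fin N → F := fun k => f (fun i => B i k) with hrdef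
  have hexp : ∀ σ : Fin N → F, f (B.mulVec σ) = ∑ k, σ k * r k := by
    intro σ
    have hBv : B.mulVec σ = ∑ k, σ k • (fun i => B i k) := by
      funext i
      simp [Matrix.mulVec, dotProduct, Finset.sum_apply, mul_comm]
    rw [hBv, map_sum]
    simp [r]
  obtain ⟨y, hy⟩ := exists_vecMul_of_dot A r (fun σ hσ => by rw [← hexp σ]; exact hf σ hσ)
  set p : Fin N → F := fun k => if Frozen A k then r k else 0 with hpdef
  have hpmem : p ∈ LinearMap.range A.vecMulLinear := by
    have hp2 : p = ∑ k, p k • (Pi.single k 1 : Fin N → F) := by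
      funext k'
      simp only [Finset.sum_apply, Pi.smul_apply, Pi.single_apply, smul_eq_mul,
        mul_ite, mul_one, mul_zero]
      rw [Finset.sum_ite_eq Finset.univ k' (fun k => p k)]
      simp
    rw [hp2]
    apply Submodule.sum_mem
    intro k _
    by_cases hk : Frozen A k
    · obtain ⟨z, hz⟩ := frozen_mem_rowspace A hk
      refine Submodule.smul_mem _ _ ?_
      rw [LinearMap.mem_range]
      exact ⟨z, by rw [Matrix.vecMulLinear_apply]; exact hz.symm⟩
    · simp only [hpdef, hk, if_false, zero_smul]
      exact Submodule.zero_mem _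
  obtain ⟨z, hz⟩ := hpmem
  rw [Matrix.vecMulLinear_apply] at hz
  apply hI
  refine ⟨y - z, ?_, ?_⟩
  · have hsub : Matrix.vecMul (y - z) A j = r j - p j := by
      rw [Matrix.sub_vecMul, ← hy, ← hz]; rfl
    refine ⟨j, ?_⟩
    simp only [Set.mem_setOf_eq, hsub, hpdef, hj, if_false, sub_zero]
    exact hne
  · intro k hk
    have hsub : Matrix.vecMul (y - z) A k = r k - p k := by
      rw [Matrix.sub_vecMul, ← hy, ← hz]; rfl
    simp only [Set.mem_setOf_eq, hsub] at hk
    by_cases hfk : Frozen A k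
    · exfalso; apply hk; simp [hpdef, hfk]
    · have hrk : r k ≠ 0 := by
        intro h0; apply hk; simp [hpdef, hfk, h0]
      refine ⟨?_, hfk⟩
      show ∃ i, B i k ≠ 0
      by_contra hcol
      push_neg at hcol
      apply hrk
      have : (fun i => B i k) = (0 : Fin M' → F) := funext fun i => hcol i
      rw [hrdef]
      simp only [this, map_zero]

end Helpers

set_option maxHeartbeats 1000000 in
set_option synthInstance.maxHeartbeats 200000 in
/-- Block nullity formula (Fact 2.6): if the set `I` of non-zero columns of `B` is not a
proper relation of `A`, then `nul [[A,0],[B,C]] + rank (B₀ C) = nul A + N'`, where `B₀`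
zeroes out the columns of `B` frozen in `A`. -/


theorem block_nullity_formula {F : Type*} [Field F]
    {M N M' N' : ℕ} (A : Matrix (Fin M) (Fin N) F) (B : Matrix (Fin M') (Fin N) F)
    (C : Matrix (Fin M') (Fin N') F)
    (hI : ¬ IsProperRelation A {j | ∃ i, B i j ≠ 0}) :
    nulMat (Matrix.fromBlocks A 0 B C)
        + (Matrix.fromCols (Matrix.of fun i j => if Frozen A j then 0 else B i j) C).rank
      = nulMat A + N' := by
  classical
  set B₀ : Matrix (Fin M') (Fin N) F :=
    Matrix.of fun i j => if Frozen A j then 0 else B i j with hB₀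
  set K : Submodule F (Fin N → F) := LinearMap.ker A.mulVecLin with hK
  let φ : (K × (Fin N' → F)) →ₗ[F] (Fin M' → F) :=
    B.mulVecLin ∘ₗ K.subtype ∘ₗ LinearMap.fst F K (Fin N' → F)
      + C.mulVecLin ∘ₗ LinearMap.snd F K (Fin N' → F)
  have hφ : ∀ x : K × (Fin N' → F), φ x = B.mulVec x.1.1 + C.mulVec x.2 := fun x => rfl
  -- range φ = map B K ⊔ range C
  have hsup : LinearMap.range φ = (K.map B.mulVecLin) ⊔ LinearMap.range C.mulVecLin := by
    apply le_antisymm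
    · rintro _ ⟨⟨⟨σ, hσ⟩, τ⟩, rfl⟩
      exact Submodule.add_mem_sup (Submodule.mem_map_of_mem hσ) (LinearMap.mem_range_self _ τ)
    · apply sup_le
      · rintro _ ⟨σ, hσ, rfl⟩
        exact ⟨(⟨σ, hσ⟩, 0), by simp [hφ]⟩
      · rintro _ ⟨τ, rfl⟩
        exact ⟨(0, τ), by simp [hφ]⟩
  -- range of fromColumns
  have hsup2 : LinearMap.range (Matrix.fromCols B₀ C).mulVecLin
      = LinearMap.range B₀.mulVecLin ⊔ LinearMap.range C.mulVecLin := by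
    apply le_antisymm
    · rintro _ ⟨x, rfl⟩
      have hx : x = Sum.elim (x ∘ Sum.inl) (x ∘ Sum.inr) := by
        funext s; cases s <;> rfl
      rw [Matrix.mulVecLin_apply, hx, Matrix.fromCols_mulVec_sumElim]
      exact Submodule.add_mem_sup (LinearMap.mem_range_self _ _) (LinearMap.mem_range_self _ _)
    · apply sup_le
      · rintro _ ⟨v, rfl⟩
        refine ⟨Sum.elim v 0, ?_⟩
        rw [Matrix.mulVecLin_apply, Matrix.fromCols_mulVec_sumElim]
        simp
      · rintro _ ⟨v, rfl⟩
        refine ⟨Sum.elim 0 v, ?_⟩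
        rw [Matrix.mulVecLin_apply, Matrix.fromCols_mulVec_sumElim]
        simp
  -- the crucial equality of column spaces
  have hBmap : K.map B.mulVecLin = LinearMap.range B₀.mulVecLin := by
    have hann : (K.map B.mulVecLin).dualAnnihilator
        = (LinearMap.range B₀.mulVecLin).dualAnnihilator := by
      ext f
      simp only [Submodule.mem_dualAnnihilator]
      constructor
      · intro hf w hw
        obtain ⟨x, rfl⟩ := hw
        have hcol : ∀ j, f (fun i => B₀ i j) = 0 := by
          intro j
          by_cases hj : Frozen A j
          · have h0 : (fun i => B₀ i j) = (0 : Fin M' → F) := by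
              funext i; simp [hB₀, hj]
            rw [h0, map_zero]
          · have h0 : (fun i => B₀ i j) = fun i => B i j := by
              funext i; simp [hB₀, hj]
            rw [h0]
            refine key_vanish A B hI f (fun σ hσ => ?_) hj
            exact hf _ (Submodule.mem_map_of_mem (show σ ∈ K from hσ))
        have hBx : B₀.mulVec x = ∑ j, x j • (fun i => B₀ i j) := by
          funext i
          simp [Matrix.mulVec, dotProduct, Finset.sum_apply, mul_comm]
        rw [Matrix.mulVecLin_apply, hBx, map_sum]
        simp [hcol]
      · intro hf w hw
        obtain ⟨σ, hσ, rfl⟩ := hw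
        have heq : B.mulVecLin σ = B₀.mulVecLin σ := by
          have hσ0 : A.mulVec σ = 0 := hσ
          simp only [Matrix.mulVecLin_apply]
          funext i
          simp only [Matrix.mulVec, dotProduct]
          refine Finset.sum_congr rfl (fun j _ => ?_)
          by_cases hj : Frozen A j
          · have : σ j = 0 := hj σ hσ0
            simp [hB₀, hj, this]
          · simp [hB₀, hj]
        rw [heq]
        exact hf _ (LinearMap.mem_range_self _ σ)
    have h2 := congrArg Submodule.dualCoannihilator hann
    rwa [Subspace.dualAnnihilator_dualCoannihilator_eq,
      Subspace.dualAnnihilator_dualCoannihilator_eq] at h2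
  have hrange : LinearMap.range (Matrix.fromCols B₀ C).mulVecLin = LinearMap.range φ := by
    rw [hsup2, ← hBmap, ← hsup]
  -- kernel equivalence
  have hkerEq : Module.finrank F (LinearMap.ker (Matrix.fromBlocks A 0 B C).mulVecLin)
      = Module.finrank F (LinearMap.ker φ) := by
    let e : (Fin N ⊕ Fin N' → F) ≃ₗ[F] (Fin N → F) × (Fin N' → F) :=
      LinearEquiv.sumArrowLequivProdArrow _ _ F F
    let L0 : (LinearMap.ker φ) →ₗ[F] (Fin N ⊕ Fin N' → F) :=
      e.symm.toLinearMap ∘ₗ (K.subtype.prodMap (LinearMap.id)) ∘ₗ (LinearMap.ker φ).subtype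
    have hL0 : ∀ x : LinearMap.ker φ, L0 x = Sum.elim (x.1.1 : Fin N → F) x.1.2 :=
      fun x => rfl
    have hmem : ∀ x : LinearMap.ker φ,
        L0 x ∈ LinearMap.ker (Matrix.fromBlocks A 0 B C).mulVecLin := by
      rintro ⟨⟨⟨σ, hσ⟩, τ⟩, hx⟩
      have hσ0 : A.mulVec σ = 0 := hσ
      have hx0 : B.mulVec σ + C.mulVec τ = 0 := hx
      rw [LinearMap.mem_ker, hL0]
      show (Matrix.fromBlocks A 0 B C).mulVec (Sum.elim σ τ) = 0
      rw [Matrix.fromBlocks_mulVec]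
      simp [hσ0, hx0]
    let L : (LinearMap.ker φ) →ₗ[F] (LinearMap.ker (Matrix.fromBlocks A 0 B C).mulVecLin) :=
      L0.codRestrict _ hmem
    have hbij : Function.Bijective L := by
      constructor
      · intro a b hab
        have h2 : Sum.elim (a.1.1 : Fin N → F) a.1.2
            = Sum.elim (b.1.1 : Fin N → F) b.1.2 := by
          have := congrArg Subtype.val hab
          rwa [show (L a : Fin N ⊕ Fin N' → F) = L0 a from rfl,
            show (L b : Fin N ⊕ Fin N' → F) = L0 b from rfl, hL0, hL0] at this
        apply Subtype.ext
        apply Prod.ext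
        · exact Subtype.ext (funext fun j => congrFun h2 (Sum.inl j))
        · exact funext fun j => congrFun h2 (Sum.inr j)
      · rintro ⟨x, hx⟩
        set σ : Fin N → F := x ∘ Sum.inl with hσdef
        set τ : Fin N' → F := x ∘ Sum.inr with hτdef
        have hxeq : x = Sum.elim σ τ := by
          funext s; cases s <;> rfl
        have hx0 : (Matrix.fromBlocks A 0 B C).mulVec x = 0 := hx
        rw [hxeq, Matrix.fromBlocks_mulVec] at hx0
        have h1 : A.mulVec σ + (0 : Matrix (Fin M) (Fin N') F).mulVec τ = 0 :=
          funext fun i => congrFun hx0 (Sum.inl i)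
        have h2 : B.mulVec σ + C.mulVec τ = 0 :=
          funext fun i => congrFun hx0 (Sum.inr i)
        rw [Matrix.zero_mulVec, add_zero] at h1
        have hσK : σ ∈ K := h1
        refine ⟨⟨(⟨σ, hσK⟩, τ), ?_⟩, ?_⟩
        · show φ (⟨σ, hσK⟩, τ) = 0
          rw [hφ]
          exact h2
        · apply Subtype.ext
          rw [show (L ⟨(⟨σ, hσK⟩, τ), _⟩ : Fin N ⊕ Fin N' → F) = Sum.elim σ τ from rfl]
          exact hxeq.symm
    exact ((LinearEquiv.ofBijective L hbij).symm.finrank_eq)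
  -- assemble
  have hrn := LinearMap.finrank_range_add_finrank_ker φ
  have hdom : Module.finrank F (K × (Fin N' → F)) = nulMat A + N' := by
    rw [Module.finrank_prod, Module.finrank_fin_fun]
    rfl
  rw [hdom] at hrn
  show Module.finrank F (LinearMap.ker (Matrix.fromBlocks A 0 B C).mulVecLin)
      + Module.finrank F (LinearMap.range (Matrix.fromCols B₀ C).mulVecLin)
    = nulMat A + N'
  rw [hkerEq, hrange]
  omega
end

section
/- Let A be a matrix over 𝔽_q with columns indexed by [n], and let j, j' ∈ [n] be distinct indices that are not frozen in A and such that {j, j'} is not a proper relation of A. Then the projection map ker A → 𝔽_q², σ ↦ (σ_j, σ_{j'}), is surjective; consequently, for any s, t ∈ 𝔽_q, the number of σ ∈ ker A with σ_j = s and σ_{j'} = t equals |ker A| / q². -/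
lemma exists_vecMul_eq {F : Type*} [Field F] {m n : ℕ} (A : Matrix (Fin m) (Fin n) F)
    (v : Fin n → F) (h : ∀ σ : Fin n → F, A.mulVec σ = 0 → dotProduct v σ = 0) :
    ∃ y : Fin m → F, Matrix.vecMul y A = v := by
  classical
  set T : (Fin n → F) →ₗ[F] (Fin m → F) := A.mulVecLin with hT
  let f : (Fin n → F) →ₗ[F] F :=
    { toFun := fun σ => dotProduct v σ
      map_add' := fun x y => by simp [dotProduct_add]
      map_smul' := fun c x => by simp [dotProduct_smul] }
  have hker : LinearMap.ker T ≤ LinearMap.ker f := by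
    intro σ hσ
    simp only [LinearMap.mem_ker] at hσ ⊢
    exact h σ hσ
  let fbar := Submodule.liftQ (LinearMap.ker T) f hker
  let e := T.quotKerEquivRange
  let g₀ : LinearMap.range T →ₗ[F] F := fbar.comp e.symm.toLinearMap
  obtain ⟨g, hg⟩ := LinearMap.exists_extend g₀
  have key : ∀ x : Fin n → F, g (T x) = dotProduct v x := by
    intro x
    have h1 : (⟨T x, LinearMap.mem_range_self T x⟩ : LinearMap.range T)
        = e (Submodule.Quotient.mk x) := by
      ext; simp [e]
    have h2 : g (T x) = g₀ ⟨T x, LinearMap.mem_range_self T x⟩ := by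
      rw [← hg]; rfl
    rw [h2, h1]
    simp [g₀, fbar, f]
  refine ⟨fun k => g (Pi.single k 1), ?_⟩
  funext i
  have hcol : T (Pi.single i 1) = fun k => A k i := by
    show A.mulVec (Pi.single i 1) = _
    rw [Matrix.mulVec_single]
    simp
    rfl
  have h3 : g (fun k => A k i) = dotProduct v (Pi.single i 1) := by
    rw [← hcol, key]
  rw [dotProduct_single, mul_one] at h3
  have h4 := LinearMap.pi_apply_eq_sum_univ g (fun k => A k i)
  have h5 : ∀ k : Fin m, (fun l => if k = l then (1:F) else 0) = Pi.single k 1 := by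
    intro k; funext l
    simp [Pi.single_apply, eq_comm]
  simp only [h5] at h4
  rw [Matrix.vecMul, ← h3, h4]
  simp [dotProduct, mul_comm]

/-- If `j ≠ j'` are unfrozen and `{j, j'}` is not a proper relation, then the projection
of the kernel onto coordinates `(j, j')` is surjective and all fibres have the same size
`|ker A| / q²`. -/
theorem kernel_projection_uniform {F : Type*} [Field F] [Fintype F]
    {m n : ℕ} (A : Matrix (Fin m) (Fin n) F) (j j' : Fin n) (hne : j ≠ j')
    (hfj : ¬ Frozen A j) (hfj' : ¬ Frozen A j')
    (hpr : ¬ IsProperRelation A {j, j'}) :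
    (∀ s t : F, ∃ σ : Fin n → F, A.mulVec σ = 0 ∧ σ j = s ∧ σ j' = t) ∧
    (∀ s t : F,
      Nat.card {σ : Fin n → F // A.mulVec σ = 0 ∧ σ j = s ∧ σ j' = t} * (Fintype.card F) ^ 2
        = Nat.card {σ : Fin n → F // A.mulVec σ = 0}) := by
  classical
  have hfj0 := hfj
  have hfj'0 := hfj'
  unfold Frozen at hfj hfj'
  push_neg at hfj hfj'
  obtain ⟨σ₁', h1m, h1ne⟩ := hfj
  obtain ⟨σ₂', h2m, h2ne⟩ := hfj'
  set σ₁ : Fin n → F := (σ₁' j)⁻¹ • σ₁' with hσ₁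
  set σ₂ : Fin n → F := (σ₂' j')⁻¹ • σ₂' with hσ₂
  have h1m' : A.mulVec σ₁ = 0 := by rw [hσ₁, Matrix.mulVec_smul, h1m, smul_zero]
  have h2m' : A.mulVec σ₂ = 0 := by rw [hσ₂, Matrix.mulVec_smul, h2m, smul_zero]
  have h1j : σ₁ j = 1 := by simp [hσ₁, inv_mul_cancel₀ h1ne]
  have h2j' : σ₂ j' = 1 := by simp [hσ₂, inv_mul_cancel₀ h2ne]
  set b : F := σ₁ j' with hb
  -- a spanning pair in the kernel
  have span : ∃ τ₁ τ₂ : Fin n → F, A.mulVec τ₁ = 0 ∧ A.mulVec τ₂ = 0 ∧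
      τ₁ j * τ₂ j' - τ₁ j' * τ₂ j ≠ 0 := by
    by_cases h3 : ∃ σ : Fin n → F, A.mulVec σ = 0 ∧ σ j' - b * σ j ≠ 0
    · obtain ⟨σ₃, h3m, h3ne⟩ := h3
      refine ⟨σ₁, σ₃, h1m', h3m, ?_⟩
      rw [h1j, one_mul, ← hb]
      exact h3ne
    · -- every kernel vector satisfies σ j' = b * σ j : proper relation, contradiction
      push_neg at h3
      exfalso
      have hbne : b ≠ 0 := by
        intro hb0
        have := h3 σ₂ h2m'
        rw [hb0, zero_mul, sub_zero, h2j'] at this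
        exact one_ne_zero this
      set v : Fin n → F := Pi.single j b + Pi.single j' (-1) with hv
      have hdot : ∀ σ : Fin n → F, A.mulVec σ = 0 → dotProduct v σ = 0 := by
        intro σ hσ
        have := h3 σ hσ
        rw [hv, add_dotProduct, single_dotProduct, single_dotProduct]
        linear_combination -this
      obtain ⟨y, hy⟩ := exists_vecMul_eq A v hdot
      apply hpr
      refine ⟨y, ?_, ?_⟩
      · refine ⟨j', ?_⟩
        simp only [Set.mem_setOf_eq, hy, hv]
        rw [Pi.add_apply, Pi.single_eq_of_ne (Ne.symm hne), Pi.single_eq_same]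
        norm_num
      · intro i hi
        simp only [Set.mem_setOf_eq, hy, hv] at hi
        have hij : i = j ∨ i = j' := by
          by_contra hc
          push_neg at hc
          rw [Pi.add_apply, Pi.single_eq_of_ne hc.1, Pi.single_eq_of_ne hc.2] at hi
          simp at hi
        constructor
        · rcases hij with h | h <;> simp [h]
        · rcases hij with h | h <;> rw [h] <;> [exact hfj0; exact hfj'0]
  obtain ⟨τ₁, τ₂, hτ₁, hτ₂, hD⟩ := span
  set D : F := τ₁ j * τ₂ j' - τ₁ j' * τ₂ j with hDdef
  have surj : ∀ s t : F, ∃ σ : Fin n → F, A.mulVec σ = 0 ∧ σ j = s ∧ σ j' = t := by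
    intro s t
    refine ⟨((s * τ₂ j' - t * τ₂ j) / D) • τ₁ + ((t * τ₁ j - s * τ₁ j') / D) • τ₂, ?_, ?_, ?_⟩
    · rw [Matrix.mulVec_add, Matrix.mulVec_smul, Matrix.mulVec_smul, hτ₁, hτ₂]
      simp
    · simp only [Pi.add_apply, Pi.smul_apply, smul_eq_mul]
      field_simp
      ring
    · simp only [Pi.add_apply, Pi.smul_apply, smul_eq_mul]
      field_simp
      ring
  refine ⟨surj, ?_⟩
  choose c hc1 hc2 hc3 using surj
  intro s t
  have eFib : {σ : Fin n → F // A.mulVec σ = 0 ∧ σ j = s ∧ σ j' = t} ≃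
      {σ : Fin n → F // A.mulVec σ = 0 ∧ σ j = 0 ∧ σ j' = 0} :=
    { toFun := fun σ => ⟨σ.1 - c s t, by
        rw [Matrix.mulVec_sub, σ.2.1, hc1, sub_zero], by
        simp [σ.2.2.1, hc2], by simp [σ.2.2.2, hc3]⟩
      invFun := fun τ => ⟨τ.1 + c s t, by
        rw [Matrix.mulVec_add, τ.2.1, hc1, add_zero], by
        simp [τ.2.2.1, hc2], by simp [τ.2.2.2, hc3]⟩
      left_inv := fun σ => by ext1; simp
      right_inv := fun τ => by ext1; simp }
  have eTot : {σ : Fin n → F // A.mulVec σ = 0} ≃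
      (F × F) × {σ : Fin n → F // A.mulVec σ = 0 ∧ σ j = 0 ∧ σ j' = 0} :=
    { toFun := fun σ => ((σ.1 j, σ.1 j'), ⟨σ.1 - c (σ.1 j) (σ.1 j'), by
        rw [Matrix.mulVec_sub, σ.2, hc1, sub_zero], by simp [hc2], by simp [hc3]⟩)
      invFun := fun p => ⟨p.2.1 + c p.1.1 p.1.2, by
        rw [Matrix.mulVec_add, p.2.2.1, hc1, zero_add]⟩
      left_inv := fun σ => by ext1; simp
      right_inv := fun p => by
        obtain ⟨⟨s', t'⟩, τ⟩ := p
        have hj : (τ.1 + c s' t') j = s' := by simp [τ.2.2.1, hc2]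
        have hj' : (τ.1 + c s' t') j' = t' := by simp [τ.2.2.2, hc3]
        simp only [hj, hj']
        refine Prod.ext rfl ?_
        ext1
        simp }
  rw [Nat.card_congr eFib, Nat.card_congr eTot, Nat.card_prod, Nat.card_prod]
  simp only [Nat.card_eq_fintype_card, sq]
  ring
end

section
/- Fix a prime power q, an integer k ≥ 3, and χ ∈ (𝔽_q \ {0})^k. Define f_χ(r) = Σ_{σ ∈ X(χ)} Π_{s ∈ 𝔽_q} r_s^{R_s(σ)} for r = (r_s)_{s∈𝔽_q} in the probability simplex, where X(χ) = {σ ∈ 𝔽_q^k : Σ_j σ_j χ_j = 0} and R_s(σ) = |{j ∈ [k] : σ_j = s}|. Then f_χ(q^{-1}·𝟙) = 1/q, the gradient satisfies ∂f_χ/∂r_t evaluated at r = q^{-1}·𝟙 equals k/q for every t ∈ 𝔽_q, and every second partial derivative ∂²f_χ/(∂r_t ∂r_u) at r = q^{-1}·𝟙 equals k(k−1)/q. -/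
open Finset Function

namespace FchiAux

variable {F : Type*} [Field F] [Fintype F] [DecidableEq F] {k : ℕ}

lemma card_fixed (s : Finset (Fin k)) (v : Fin k → F) :
    (univ.filter fun σ : Fin k → F => ∀ j ∈ s, σ j = v j).card
      = Fintype.card F ^ (k - s.card) := by
  have h : (univ.filter fun σ : Fin k → F => ∀ j ∈ s, σ j = v j)
      = Fintype.piFinset (fun j => if j ∈ s then {v j} else univ) := by
    ext σ
    simp only [mem_filter, mem_univ, true_and, Fintype.mem_piFinset]
    constructor
    · intro h j
      by_cases hj : j ∈ s <;> simp [hj, h j]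
    · intro h j hj
      have := h j
      rwa [if_pos hj, mem_singleton] at this
  rw [h, Fintype.card_piFinset]
  have h2 : ∀ j : Fin k, (if j ∈ s then ({v j} : Finset F) else univ).card
      = if j ∈ s then 1 else Fintype.card F := by
    intro j; split <;> simp
  rw [Finset.prod_congr rfl fun j _ => h2 j, Finset.prod_ite, Finset.prod_const,
    Finset.prod_const, one_pow, one_mul]
  have h3 : (univ.filter fun j : Fin k => ¬ j ∈ s) = sᶜ := by
    ext j; simp
  rw [h3, Finset.card_compl, Fintype.card_fin]

lemma card_sol (χ : Fin k → F) (s : Finset (Fin k)) (v : Fin k → F) (j0 : Fin k)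
    (hj0 : j0 ∉ s) (hχ0 : χ j0 ≠ 0) :
    (univ.filter fun σ : Fin k → F =>
        (∑ j, σ j * χ j) = 0 ∧ ∀ j ∈ s, σ j = v j).card
      = Fintype.card F ^ (k - 1 - s.card) := by
  have hupd : ∀ (σ : Fin k → F) (c : F),
      ∑ j, Function.update σ j0 c j * χ j = c * χ j0 + ∑ j ∈ univ.erase j0, σ j * χ j := by
    intro σ c
    rw [← Finset.add_sum_erase univ (fun j => Function.update σ j0 c j * χ j) (mem_univ j0),
      Function.update_self]
    congr 1
    exact Finset.sum_congr rfl fun j hj => by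
      rw [Function.update_of_ne (Finset.ne_of_mem_erase hj)]
  have hsplit : ∀ σ : Fin k → F,
      ∑ j, σ j * χ j = σ j0 * χ j0 + ∑ j ∈ univ.erase j0, σ j * χ j := fun σ =>
    (Finset.add_sum_erase univ (fun j => σ j * χ j) (mem_univ j0)).symm
  have herase : ∀ (σ : Fin k → F) (c : F),
      ∑ j ∈ univ.erase j0, Function.update σ j0 c j * χ j
        = ∑ j ∈ univ.erase j0, σ j * χ j :=
    fun σ c => Finset.sum_congr rfl fun j hj => by
      rw [Function.update_of_ne (Finset.ne_of_mem_erase hj)]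
  have key : (univ.filter fun σ : Fin k → F =>
        (∑ j, σ j * χ j) = 0 ∧ ∀ j ∈ s, σ j = v j).card
      = (univ.filter fun τ : Fin k → F =>
          ∀ j ∈ insert j0 s, τ j = Function.update v j0 0 j).card := by
    apply Finset.card_nbij' (fun σ => Function.update σ j0 0)
      (fun τ => Function.update τ j0 (-((χ j0)⁻¹ * ∑ j ∈ univ.erase j0, τ j * χ j)))
    · intro σ hσ
      simp only [Finset.mem_coe, mem_filter] at hσ ⊢
      obtain ⟨-, hσ0, hσs⟩ := hσ
      refine ⟨mem_univ _, ?_⟩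
      intro j hj
      rcases Finset.mem_insert.1 hj with rfl | hjs
      · rw [Function.update_self, Function.update_self]
      · have hne : j ≠ j0 := fun h => hj0 (h ▸ hjs)
        rw [Function.update_of_ne hne, Function.update_of_ne hne]
        exact hσs j hjs
    · intro τ hτ
      simp only [Finset.mem_coe, mem_filter] at hτ ⊢
      obtain ⟨-, hτs⟩ := hτ
      refine ⟨mem_univ _, ?_, ?_⟩
      · rw [hupd]
        field_simp
        ring
      · intro j hjs
        have hne : j ≠ j0 := fun h => hj0 (h ▸ hjs)
        rw [Function.update_of_ne hne]
        have := hτs j (Finset.mem_insert_of_mem hjs)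
        rwa [Function.update_of_ne hne] at this
    · intro σ hσ
      rw [Finset.mem_coe, mem_filter] at hσ
      obtain ⟨-, hσ0, -⟩ := hσ
      beta_reduce
      rw [Function.update_idem, herase]
      have h1 : ∑ j ∈ univ.erase j0, σ j * χ j = -(σ j0 * χ j0) := by
        have := hsplit σ
        rw [hσ0] at this
        linear_combination -this
      rw [h1]
      have h2 : -((χ j0)⁻¹ * -(σ j0 * χ j0)) = σ j0 := by field_simp
      rw [h2, Function.update_eq_self]
    · intro τ hτ
      rw [Finset.mem_coe, mem_filter] at hτ
      have hτ0 : τ j0 = 0 := by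
        have := hτ.2 j0 (Finset.mem_insert_self _ _)
        rwa [Function.update_self] at this
      funext j
      rcases eq_or_ne j j0 with rfl | h
      · simp [hτ0]
      · simp [Function.update_of_ne h]
  have hc : k - (Finset.card (insert j0 s)) = k - 1 - s.card := by
    rw [Finset.card_insert_of_notMem hj0, Nat.sub_sub, Nat.add_comm]
  rw [key, card_fixed, hc]


/-- number of coordinates of `σ` equal to `s` -/
def cnt (σ : Fin k → F) (s : F) : ℕ := (univ.filter fun j => σ j = s).card

omit [Field F] in
lemma cnt_total (σ : Fin k → F) : ∑ s : F, cnt σ s = k := by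
  have h := Finset.card_eq_sum_card_fiberwise
    (f := σ) (s := (univ : Finset (Fin k))) (t := univ) (fun x _ => mem_univ _)
  rw [Finset.card_univ, Fintype.card_fin] at h
  exact h.symm

omit [Field F] in
lemma cnt_le (σ : Fin k → F) (t : F) : cnt σ t ≤ k := by
  have := Finset.card_filter_le (univ : Finset (Fin k)) (fun j => σ j = t)
  rwa [Finset.card_univ, Fintype.card_fin] at this

lemma card_sols (hk : 3 ≤ k) (χ : Fin k → F) (hχ : ∀ j, χ j ≠ 0) :
    (univ.filter fun σ : Fin k → F => (∑ j, σ j * χ j) = 0).card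
      = Fintype.card F ^ (k - 1) := by
  have h := card_sol χ ∅ (fun _ => (0 : F)) ⟨0, by omega⟩ (Finset.notMem_empty _) (hχ _)
  simp only [Finset.notMem_empty, false_implies, implies_true, and_true,
    Finset.card_empty, Nat.sub_zero] at h
  exact h

lemma card_one (hk : 3 ≤ k) (χ : Fin k → F) (hχ : ∀ j, χ j ≠ 0) (j : Fin k) (t : F) :
    (univ.filter fun σ : Fin k → F => (∑ i, σ i * χ i) = 0 ∧ σ j = t).card
      = Fintype.card F ^ (k - 2) := by
  have hex : ∃ j0 : Fin k, j0 ∉ ({j} : Finset (Fin k)) := by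
    have hne : (({j} : Finset (Fin k))ᶜ).Nonempty := by
      rw [← Finset.card_pos, Finset.card_compl, Fintype.card_fin, Finset.card_singleton]
      omega
    obtain ⟨j0, hj0⟩ := hne
    exact ⟨j0, Finset.mem_compl.1 hj0⟩
  obtain ⟨j0, hj0⟩ := hex
  have h := card_sol χ {j} (fun _ => t) j0 hj0 (hχ _)
  simp only [Finset.mem_singleton, forall_eq, Finset.card_singleton] at h
  rw [h, show k - 1 - 1 = k - 2 by rw [Nat.sub_sub]]

lemma card_two (hk : 3 ≤ k) (χ : Fin k → F) (hχ : ∀ j, χ j ≠ 0)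
    (j j' : Fin k) (hne : j ≠ j') (t u : F) :
    (univ.filter fun σ : Fin k → F =>
        (∑ i, σ i * χ i) = 0 ∧ σ j = t ∧ σ j' = u).card
      = Fintype.card F ^ (k - 3) := by
  have hex : ∃ j0 : Fin k, j0 ∉ ({j, j'} : Finset (Fin k)) := by
    have hne2 : (({j, j'} : Finset (Fin k))ᶜ).Nonempty := by
      rw [← Finset.card_pos, Finset.card_compl, Fintype.card_fin]
      have : ({j, j'} : Finset (Fin k)).card ≤ 2 := Finset.card_insert_le _ _ |>.trans (by simp)
      omega
    obtain ⟨j0, hj0⟩ := hne2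
    exact ⟨j0, Finset.mem_compl.1 hj0⟩
  obtain ⟨j0, hj0⟩ := hex
  have h := card_sol χ {j, j'} (fun i => if i = j then t else u) j0 hj0 (hχ _)
  have hcard2 : ({j, j'} : Finset (Fin k)).card = 2 := by
    rw [Finset.card_insert_of_notMem (by simpa using hne), Finset.card_singleton]
  rw [hcard2] at h
  have hpred : (univ.filter fun σ : Fin k → F =>
        (∑ i, σ i * χ i) = 0 ∧ ∀ i ∈ ({j, j'} : Finset (Fin k)),
          σ i = (fun i => if i = j then t else u) i)
      = (univ.filter fun σ : Fin k → F =>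
        (∑ i, σ i * χ i) = 0 ∧ σ j = t ∧ σ j' = u) := by
    apply Finset.filter_congr
    intro σ _
    simp [Ne.symm hne]
  rw [hpred] at h
  rw [h, show k - 1 - 2 = k - 3 by rw [Nat.sub_sub]]

lemma sum_cnt_master (χ : Fin k → F) (t u : F) :
    ∑ σ ∈ univ.filter (fun σ : Fin k → F => (∑ j, σ j * χ j) = 0), cnt σ t * cnt σ u
      = ∑ j : Fin k, ∑ j' : Fin k,
          (univ.filter fun σ : Fin k → F =>
            (∑ i, σ i * χ i) = 0 ∧ σ j = t ∧ σ j' = u).card := by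
  have h1 : ∀ σ : Fin k → F, cnt σ t * cnt σ u
      = ∑ j : Fin k, ∑ j' : Fin k, if σ j = t ∧ σ j' = u then 1 else 0 := by
    intro σ
    rw [cnt, cnt, Finset.card_filter, Finset.card_filter, Fintype.sum_mul_sum]
    exact Finset.sum_congr rfl fun j _ => Finset.sum_congr rfl fun j' _ => by
      by_cases h1 : σ j = t <;> by_cases h2 : σ j' = u <;> simp [h1, h2]
  rw [Finset.sum_congr rfl fun σ _ => h1 σ, Finset.sum_comm]
  refine Finset.sum_congr rfl fun j _ => ?_
  rw [Finset.sum_comm]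
  refine Finset.sum_congr rfl fun j' _ => ?_
  rw [← Finset.card_filter, Finset.filter_filter]

lemma sum_cnt (hk : 3 ≤ k) (χ : Fin k → F) (hχ : ∀ j, χ j ≠ 0) (t : F) :
    ∑ σ ∈ univ.filter (fun σ : Fin k → F => (∑ j, σ j * χ j) = 0), cnt σ t
      = k * Fintype.card F ^ (k - 2) := by
  have h1 : ∀ σ : Fin k → F, cnt σ t = ∑ j : Fin k, if σ j = t then 1 else 0 := by
    intro σ; rw [cnt, Finset.card_filter]
  rw [Finset.sum_congr rfl fun σ _ => h1 σ, Finset.sum_comm]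
  have h2 : ∀ j : Fin k,
      (∑ σ ∈ univ.filter (fun σ : Fin k → F => (∑ j, σ j * χ j) = 0),
        if σ j = t then 1 else 0) = Fintype.card F ^ (k - 2) := by
    intro j
    rw [← Finset.card_filter, Finset.filter_filter]
    exact card_one hk χ hχ j t
  rw [Finset.sum_congr rfl fun j _ => h2 j, Finset.sum_const, Finset.card_univ,
    Fintype.card_fin, smul_eq_mul]

lemma sum_cnt_mul (hk : 3 ≤ k) (χ : Fin k → F) (hχ : ∀ j, χ j ≠ 0)
    (t u : F) (htu : t ≠ u) :
    ∑ σ ∈ univ.filter (fun σ : Fin k → F => (∑ j, σ j * χ j) = 0), cnt σ t * cnt σ u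
      = k * ((k - 1) * Fintype.card F ^ (k - 3)) := by
  rw [sum_cnt_master]
  have h : ∀ j : Fin k,
      (∑ j' : Fin k, (univ.filter fun σ : Fin k → F =>
          (∑ i, σ i * χ i) = 0 ∧ σ j = t ∧ σ j' = u).card)
        = (k - 1) * Fintype.card F ^ (k - 3) := by
    intro j
    rw [← Finset.add_sum_erase univ _ (mem_univ j)]
    have hz : (univ.filter fun σ : Fin k → F =>
        (∑ i, σ i * χ i) = 0 ∧ σ j = t ∧ σ j = u).card = 0 := by
      rw [Finset.card_eq_zero, Finset.filter_eq_empty_iff]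
      rintro σ - ⟨-, h1, h2⟩
      exact htu (h1.symm.trans h2)
    rw [hz, zero_add]
    rw [Finset.sum_congr rfl fun j' hj' =>
      card_two hk χ hχ j j' (Ne.symm (Finset.ne_of_mem_erase hj')) t u]
    rw [Finset.sum_const, Finset.card_erase_of_mem (mem_univ j), Finset.card_univ,
      Fintype.card_fin, smul_eq_mul]
  rw [Finset.sum_congr rfl fun j _ => h j, Finset.sum_const, Finset.card_univ,
    Fintype.card_fin, smul_eq_mul]

lemma sum_cnt_sq (hk : 3 ≤ k) (χ : Fin k → F) (hχ : ∀ j, χ j ≠ 0) (t : F) :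
    ∑ σ ∈ univ.filter (fun σ : Fin k → F => (∑ j, σ j * χ j) = 0), cnt σ t * cnt σ t
      = k * Fintype.card F ^ (k - 2) + k * ((k - 1) * Fintype.card F ^ (k - 3)) := by
  rw [sum_cnt_master]
  have h : ∀ j : Fin k,
      (∑ j' : Fin k, (univ.filter fun σ : Fin k → F =>
          (∑ i, σ i * χ i) = 0 ∧ σ j = t ∧ σ j' = t).card)
        = Fintype.card F ^ (k - 2) + (k - 1) * Fintype.card F ^ (k - 3) := by
    intro j
    rw [← Finset.add_sum_erase univ _ (mem_univ j)]
    have hd : (univ.filter fun σ : Fin k → F =>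
        (∑ i, σ i * χ i) = 0 ∧ σ j = t ∧ σ j = t).card
        = Fintype.card F ^ (k - 2) := by
      have : (univ.filter fun σ : Fin k → F =>
          (∑ i, σ i * χ i) = 0 ∧ σ j = t ∧ σ j = t)
          = (univ.filter fun σ : Fin k → F => (∑ i, σ i * χ i) = 0 ∧ σ j = t) := by
        apply Finset.filter_congr; intro σ _; simp [and_assoc]
      rw [this]
      exact card_one hk χ hχ j t
    rw [hd]
    congr 1
    rw [Finset.sum_congr rfl fun j' hj' =>
      card_two hk χ hχ j j' (Ne.symm (Finset.ne_of_mem_erase hj')) t t]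
    rw [Finset.sum_const, Finset.card_erase_of_mem (mem_univ j), Finset.card_univ,
      Fintype.card_fin, smul_eq_mul]
  rw [Finset.sum_congr rfl fun j _ => h j, Finset.sum_const, Finset.card_univ,
    Fintype.card_fin, smul_eq_mul, Nat.mul_add]

lemma sum_cnt_pred (hk : 3 ≤ k) (χ : Fin k → F) (hχ : ∀ j, χ j ≠ 0) (t : F) :
    ∑ σ ∈ univ.filter (fun σ : Fin k → F => (∑ j, σ j * χ j) = 0),
        cnt σ t * (cnt σ t - 1)
      = k * ((k - 1) * Fintype.card F ^ (k - 3)) := by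
  have hpt : ∀ n : ℕ, n * (n - 1) = n * n - n := by
    intro n
    cases n with
    | zero => rfl
    | succ m => rw [Nat.succ_sub_one, Nat.mul_succ, Nat.add_sub_cancel]
  rw [Finset.sum_congr rfl fun σ _ => hpt (cnt σ t)]
  rw [Finset.sum_tsub_distrib (f := fun σ => cnt σ t * cnt σ t) (g := fun σ => cnt σ t) _
    (fun σ _ => by
      rcases Nat.eq_zero_or_pos (cnt σ t) with h | h
      · simp [h]
      · exact Nat.le_mul_of_pos_left _ h)]
  rw [sum_cnt_sq hk χ hχ t, sum_cnt hk χ hχ t, Nat.add_sub_cancel_left]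

/-- derivative of `x ↦ ∑ σ, x ^ n σ * c σ` -/
lemma hasDerivAt_sum_pow_mul {ι : Type*} (X : Finset ι) (n : ι → ℕ) (c : ι → ℝ) (x : ℝ) :
    HasDerivAt (fun y : ℝ => ∑ σ ∈ X, y ^ n σ * c σ)
      (∑ σ ∈ X, (n σ : ℝ) * x ^ (n σ - 1) * c σ) x :=
  HasDerivAt.fun_sum fun σ _ => (hasDerivAt_pow (n σ) x).mul_const (c σ)

/-- derivative of `x ↦ ∑ σ, a σ * x ^ n σ * c σ` -/
lemma hasDerivAt_sum_mul_pow_mul {ι : Type*} (X : Finset ι) (a : ι → ℝ) (n : ι → ℕ)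
    (c : ι → ℝ) (x : ℝ) :
    HasDerivAt (fun y : ℝ => ∑ σ ∈ X, a σ * y ^ n σ * c σ)
      (∑ σ ∈ X, a σ * ((n σ : ℝ) * x ^ (n σ - 1)) * c σ) x :=
  HasDerivAt.fun_sum fun σ _ =>
    (HasDerivAt.const_mul (a σ) (hasDerivAt_pow (n σ) x)).mul_const (c σ)

/-- derivative of `x ↦ ∑ σ, a σ * (x ^ n σ * c σ)` -/
lemma hasDerivAt_sum_mul_pow_mul' {ι : Type*} (X : Finset ι) (a : ι → ℝ) (n : ι → ℕ)
    (c : ι → ℝ) (x : ℝ) :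
    HasDerivAt (fun y : ℝ => ∑ σ ∈ X, a σ * (y ^ n σ * c σ))
      (∑ σ ∈ X, a σ * ((n σ : ℝ) * x ^ (n σ - 1) * c σ)) x :=
  HasDerivAt.fun_sum fun σ _ =>
    HasDerivAt.const_mul (a σ) ((hasDerivAt_pow (n σ) x).mul_const (c σ))

end FchiAux


/-- `f_χ(r) = Σ_{σ ∈ X(χ)} Π_s r_s^{R_s(σ)}` where `X(χ)` is the solution set of the
equation `Σ_j σ_j χ_j = 0` and `R_s(σ)` counts coordinates of `σ` equal to `s`. -/
noncomputable def fchi {F : Type*} [Field F] [Fintype F] [DecidableEq F] {k : ℕ}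
    (χ : Fin k → F) (r : F → ℝ) : ℝ :=
  ∑ σ : Fin k → F,
    if (∑ j, σ j * χ j) = 0 then
      ∏ s : F, r s ^ (Finset.univ.filter fun j => σ j = s).card
    else 0

namespace FchiAux

variable {F : Type*} [Field F] [Fintype F] [DecidableEq F] {k : ℕ}

lemma fchi_eq (χ : Fin k → F) (r : F → ℝ) :
    fchi χ r = ∑ σ ∈ univ.filter (fun σ : Fin k → F => (∑ j, σ j * χ j) = 0),
      ∏ s : F, r s ^ cnt σ s := by
  unfold fchi cnt
  rw [Finset.sum_filter]

lemma expand1 (χ : Fin k → F) (r : F → ℝ) (t : F) (x : ℝ) :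
    fchi χ (Function.update r t x)
      = ∑ σ ∈ univ.filter (fun σ : Fin k → F => (∑ j, σ j * χ j) = 0),
          x ^ cnt σ t * ∏ s ∈ univ.erase t, r s ^ cnt σ s := by
  rw [fchi_eq]
  refine Finset.sum_congr rfl fun σ _ => ?_
  rw [← Finset.mul_prod_erase univ _ (mem_univ t), Function.update_self]
  congr 1
  exact Finset.prod_congr rfl fun s hs => by
    rw [Function.update_of_ne (Finset.ne_of_mem_erase hs)]

lemma expand2 (χ : Fin k → F) (r : F → ℝ) (t u : F) (htu : t ≠ u) (x y : ℝ) :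
    fchi χ (Function.update (Function.update r t x) u y)
      = ∑ σ ∈ univ.filter (fun σ : Fin k → F => (∑ j, σ j * χ j) = 0),
          y ^ cnt σ u *
            (x ^ cnt σ t * ∏ s ∈ (univ.erase u).erase t, r s ^ cnt σ s) := by
  rw [expand1]
  refine Finset.sum_congr rfl fun σ _ => ?_
  congr 1
  rw [← Finset.mul_prod_erase (univ.erase u) _
    (Finset.mem_erase.2 ⟨htu, mem_univ t⟩), Function.update_self]
  congr 1
  exact Finset.prod_congr rfl fun s hs => by
    rw [Function.update_of_ne (Finset.mem_erase.1 hs).1]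

end FchiAux

open FchiAux in
/-- Value and first and second partial derivatives of `f_χ` at the uniform vector. -/
theorem fchi_derivs_at_uniform {F : Type*} [Field F] [Fintype F] [DecidableEq F]
    {k : ℕ} (hk : 3 ≤ k) (χ : Fin k → F) (hχ : ∀ j, χ j ≠ 0) :
    fchi χ (fun _ => ((Fintype.card F : ℝ))⁻¹) = ((Fintype.card F : ℝ))⁻¹ ∧
    (∀ t : F,
      deriv (fun x => fchi χ (Function.update (fun _ => ((Fintype.card F : ℝ))⁻¹) t x))
          ((Fintype.card F : ℝ))⁻¹
        = (k : ℝ) / (Fintype.card F : ℝ)) ∧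
    (∀ t u : F, t ≠ u →
      deriv (fun x => deriv
          (fun y => fchi χ (Function.update
            (Function.update (fun _ => ((Fintype.card F : ℝ))⁻¹) t x) u y))
          ((Fintype.card F : ℝ))⁻¹) ((Fintype.card F : ℝ))⁻¹
        = (k : ℝ) * ((k : ℝ) - 1) / (Fintype.card F : ℝ)) ∧
    (∀ t : F,
      deriv (deriv (fun x => fchi χ (Function.update (fun _ => ((Fintype.card F : ℝ))⁻¹) t x)))
          ((Fintype.card F : ℝ))⁻¹
        = (k : ℝ) * ((k : ℝ) - 1) / (Fintype.card F : ℝ)) := by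
  obtain ⟨m, rfl⟩ : ∃ m, k = m + 3 := ⟨k - 3, by omega⟩
  have hq0 : (Fintype.card F : ℝ) ≠ 0 := Nat.cast_ne_zero.2 Fintype.card_ne_zero
  set p : ℝ := ((Fintype.card F : ℝ))⁻¹ with hp
  have hpowc : ∀ a : ℕ, (Fintype.card F : ℝ) ^ a * p ^ (a + 1) = p := by
    intro a
    rw [pow_succ, ← mul_assoc, hp, ← mul_pow, mul_inv_cancel₀ hq0, one_pow, one_mul]
  have hcanc2 : (Fintype.card F : ℝ) ^ (m + 2) * p ^ (m + 3) = p := by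
    rw [show m + 3 = m + 2 + 1 by omega]; exact hpowc (m + 2)
  have hcanc1 : (Fintype.card F : ℝ) ^ (m + 1) * p ^ (m + 2) = p := by
    rw [show m + 2 = m + 1 + 1 by omega]; exact hpowc (m + 1)
  have hcanc0 : (Fintype.card F : ℝ) ^ m * p ^ (m + 1) = p := hpowc m
  have hsub2 : (m + 3) - 2 = m + 1 := by omega
  have hsub3 : (m + 3) - 3 = m := by omega
  have hsub1 : (m + 3) - 1 = m + 2 := by omega
  have harith1 : ∀ a b : ℕ, 0 < a → a + b = m + 3 → a - 1 + b = m + 2 := by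
    intro a b h1 h2; omega
  have harith2 : ∀ a b c : ℕ, 0 < a → 0 < b → b + (a + c) = m + 3 →
      b - 1 + (a - 1 + c) = m + 1 := by
    intro a b c h1 h2 h3; omega
  have harith3 : ∀ a b : ℕ, 2 ≤ a → a + b = m + 3 → a - 1 - 1 + b = m + 1 := by
    intro a b h1 h2; omega
  have harith4 : ∀ a : ℕ, a < 2 → a = 0 ∨ a = 1 := by intro a h; omega
  have hXcard :
      (univ.filter fun σ : Fin (m + 3) → F => (∑ j, σ j * χ j) = 0).card
        = Fintype.card F ^ ((m + 3) - 1) := card_sols hk χ hχ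
  rw [hsub1] at hXcard
  have hsum_erase : ∀ (σ : Fin (m + 3) → F) (t : F),
      cnt σ t + ∑ s ∈ univ.erase t, cnt σ s = m + 3 := by
    intro σ t
    rw [Finset.add_sum_erase univ (cnt σ) (mem_univ t), cnt_total]
  -- Part 1
  have part1 : fchi χ (fun _ : F => p) = p := by
    have h1 : fchi χ (fun _ : F => p)
        = ∑ _σ ∈ univ.filter (fun σ : Fin (m + 3) → F => (∑ j, σ j * χ j) = 0),
            p ^ (m + 3) := by
      rw [fchi_eq]
      refine Finset.sum_congr rfl fun σ _ => ?_
      show (∏ s : F, p ^ cnt σ s) = p ^ (m + 3)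
      rw [Finset.prod_pow_eq_pow_sum, cnt_total]
    rw [h1, Finset.sum_const, hXcard, nsmul_eq_mul]
    push_cast
    exact hcanc2
  -- Part 2
  have part2 : ∀ t : F,
      deriv (fun x => fchi χ (Function.update (fun _ => p) t x)) p
        = ((m + 3 : ℕ) : ℝ) / (Fintype.card F : ℝ) := by
    intro t
    have hexp : (fun x => fchi χ (Function.update (fun _ => p) t x))
        = fun x => ∑ σ ∈ univ.filter (fun σ : Fin (m + 3) → F => (∑ j, σ j * χ j) = 0),
            x ^ cnt σ t * ∏ s ∈ univ.erase t, p ^ cnt σ s :=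
      funext fun x => expand1 χ _ t x
    rw [hexp, (hasDerivAt_sum_pow_mul _ (fun σ => cnt σ t)
      (fun σ => ∏ s ∈ univ.erase t, p ^ cnt σ s) p).deriv]
    have hterm : ∀ σ ∈ univ.filter (fun σ : Fin (m + 3) → F => (∑ j, σ j * χ j) = 0),
        (cnt σ t : ℝ) * p ^ (cnt σ t - 1) * ∏ s ∈ univ.erase t, p ^ cnt σ s
          = (cnt σ t : ℝ) * p ^ (m + 2) := by
      intro σ hσ
      rw [Finset.prod_pow_eq_pow_sum]
      rcases Nat.eq_zero_or_pos (cnt σ t) with h0 | h0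
      · rw [h0]; simp
      · have he := harith1 _ _ h0 (hsum_erase σ t)
        rw [mul_assoc, ← pow_add, he]
    rw [Finset.sum_congr rfl hterm, ← Finset.sum_mul, ← Nat.cast_sum,
      sum_cnt hk χ hχ t, hsub2]
    push_cast
    rw [div_eq_mul_inv]
    linear_combination ((m : ℝ) + 3) * hcanc1 + ((m : ℝ) + 3) * hp
  -- Part 3
  have part3 : ∀ t u : F, t ≠ u →
      deriv (fun x => deriv
          (fun y => fchi χ (Function.update (Function.update (fun _ => p) t x) u y)) p) p
        = ((m + 3 : ℕ) : ℝ) * (((m + 3 : ℕ) : ℝ) - 1) / (Fintype.card F : ℝ) := by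
    intro t u htu
    have hφ : (fun x => deriv
          (fun y => fchi χ (Function.update (Function.update (fun _ => p) t x) u y)) p)
        = fun x => ∑ σ ∈ univ.filter (fun σ : Fin (m + 3) → F => (∑ j, σ j * χ j) = 0),
            (cnt σ u : ℝ) * p ^ (cnt σ u - 1) *
              (x ^ cnt σ t * ∏ s ∈ (univ.erase u).erase t, p ^ cnt σ s) := by
      funext x
      have hin : (fun y => fchi χ (Function.update (Function.update (fun _ => p) t x) u y))
          = fun y => ∑ σ ∈ univ.filter
              (fun σ : Fin (m + 3) → F => (∑ j, σ j * χ j) = 0),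
              y ^ cnt σ u *
                (x ^ cnt σ t * ∏ s ∈ (univ.erase u).erase t, p ^ cnt σ s) :=
        funext fun y => expand2 χ _ t u htu x y
      rw [hin, (hasDerivAt_sum_pow_mul _ (fun σ => cnt σ u)
        (fun σ => x ^ cnt σ t * ∏ s ∈ (univ.erase u).erase t, p ^ cnt σ s) p).deriv]
    rw [hφ, (hasDerivAt_sum_mul_pow_mul' _
      (fun σ => (cnt σ u : ℝ) * p ^ (cnt σ u - 1)) (fun σ => cnt σ t)
      (fun σ => ∏ s ∈ (univ.erase u).erase t, p ^ cnt σ s) p).deriv]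
    have hterm : ∀ σ ∈ univ.filter (fun σ : Fin (m + 3) → F => (∑ j, σ j * χ j) = 0),
        (cnt σ u : ℝ) * p ^ (cnt σ u - 1) *
            ((cnt σ t : ℝ) * p ^ (cnt σ t - 1) *
              ∏ s ∈ (univ.erase u).erase t, p ^ cnt σ s)
          = ((cnt σ t * cnt σ u : ℕ) : ℝ) * p ^ (m + 1) := by
      intro σ hσ
      rw [Finset.prod_pow_eq_pow_sum]
      have hs1 := hsum_erase σ u
      have hs2 : cnt σ t + ∑ s ∈ (univ.erase u).erase t, cnt σ s
          = ∑ s ∈ univ.erase u, cnt σ s :=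
        Finset.add_sum_erase _ (cnt σ) (Finset.mem_erase.2 ⟨htu, mem_univ t⟩)
      rw [← hs2] at hs1
      rcases Nat.eq_zero_or_pos (cnt σ u) with h0 | h0
      · rw [h0]; simp
      rcases Nat.eq_zero_or_pos (cnt σ t) with h1 | h1
      · rw [h1]; simp
      have he := harith2 _ _ _ h1 h0 hs1
      calc (cnt σ u : ℝ) * p ^ (cnt σ u - 1) *
            ((cnt σ t : ℝ) * p ^ (cnt σ t - 1)
              * p ^ ∑ s ∈ (univ.erase u).erase t, cnt σ s)
          = (cnt σ t : ℝ) * (cnt σ u : ℝ) *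
            (p ^ (cnt σ u - 1) * (p ^ (cnt σ t - 1)
              * p ^ ∑ s ∈ (univ.erase u).erase t, cnt σ s)) := by ring
        _ = ((cnt σ t * cnt σ u : ℕ) : ℝ) * p ^ (m + 1) := by
            rw [← pow_add, ← pow_add, he, Nat.cast_mul]
    rw [Finset.sum_congr rfl hterm, ← Finset.sum_mul, ← Nat.cast_sum,
      sum_cnt_mul hk χ hχ t u htu, hsub3, hsub1]
    push_cast
    rw [div_eq_mul_inv]
    linear_combination ((m : ℝ) + 3) * ((m : ℝ) + 2) * hcanc0
      + ((m : ℝ) + 3) * ((m : ℝ) + 2) * hp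
  -- Part 4
  have part4 : ∀ t : F,
      deriv (deriv (fun x => fchi χ (Function.update (fun _ => p) t x))) p
        = ((m + 3 : ℕ) : ℝ) * (((m + 3 : ℕ) : ℝ) - 1) / (Fintype.card F : ℝ) := by
    intro t
    have hexp : (fun x => fchi χ (Function.update (fun _ => p) t x))
        = fun x => ∑ σ ∈ univ.filter (fun σ : Fin (m + 3) → F => (∑ j, σ j * χ j) = 0),
            x ^ cnt σ t * ∏ s ∈ univ.erase t, p ^ cnt σ s :=
      funext fun x => expand1 χ _ t x
    rw [hexp]
    have hd1 : deriv (fun x => ∑ σ ∈ univ.filter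
          (fun σ : Fin (m + 3) → F => (∑ j, σ j * χ j) = 0),
          x ^ cnt σ t * ∏ s ∈ univ.erase t, p ^ cnt σ s)
        = fun x => ∑ σ ∈ univ.filter
            (fun σ : Fin (m + 3) → F => (∑ j, σ j * χ j) = 0),
            (cnt σ t : ℝ) * x ^ (cnt σ t - 1) * ∏ s ∈ univ.erase t, p ^ cnt σ s :=
      funext fun x => (hasDerivAt_sum_pow_mul _ (fun σ => cnt σ t)
        (fun σ => ∏ s ∈ univ.erase t, p ^ cnt σ s) x).deriv
    rw [hd1, (hasDerivAt_sum_mul_pow_mul _ (fun σ => (cnt σ t : ℝ))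
      (fun σ => cnt σ t - 1) (fun σ => ∏ s ∈ univ.erase t, p ^ cnt σ s) p).deriv]
    have hterm : ∀ σ ∈ univ.filter (fun σ : Fin (m + 3) → F => (∑ j, σ j * χ j) = 0),
        (cnt σ t : ℝ) * (((cnt σ t - 1 : ℕ) : ℝ) * p ^ (cnt σ t - 1 - 1)) *
            ∏ s ∈ univ.erase t, p ^ cnt σ s
          = ((cnt σ t * (cnt σ t - 1) : ℕ) : ℝ) * p ^ (m + 1) := by
      intro σ hσ
      rw [Finset.prod_pow_eq_pow_sum]
      have hs := hsum_erase σ t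
      rcases Nat.lt_or_ge (cnt σ t) 2 with h0 | h0
      · rcases harith4 _ h0 with h | h <;> rw [h] <;> simp
      have he := harith3 _ _ h0 hs
      calc (cnt σ t : ℝ) * (((cnt σ t - 1 : ℕ) : ℝ) * p ^ (cnt σ t - 1 - 1)) *
            p ^ ∑ s ∈ univ.erase t, cnt σ s
          = (cnt σ t : ℝ) * ((cnt σ t - 1 : ℕ) : ℝ) *
            (p ^ (cnt σ t - 1 - 1) * p ^ ∑ s ∈ univ.erase t, cnt σ s) := by ring
        _ = ((cnt σ t * (cnt σ t - 1) : ℕ) : ℝ) * p ^ (m + 1) := by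
            rw [← pow_add, he, Nat.cast_mul]
    rw [Finset.sum_congr rfl hterm, ← Finset.sum_mul, ← Nat.cast_sum,
      sum_cnt_pred hk χ hχ t, hsub3, hsub1]
    push_cast
    rw [div_eq_mul_inv]
    linear_combination ((m : ℝ) + 3) * ((m : ℝ) + 2) * hcanc0
      + ((m : ℝ) + 3) * ((m : ℝ) + 2) * hp
  exact ⟨part1, part2, part3, part4⟩
end

section
/- Let A be an m×n matrix over 𝔽_q whose rows have at most k non-zero entries each, and let J ⊆ [n] be the set of positions of non-zero entries of a row vector a ∈ 𝔽_q^n. Let A' be A with row a appended. If J ⊆ F(A) (all indices of J are frozen in A) and J is not a proper relation of A, then nul(A') = nul(A). -/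
/-- If the support `J` of the appended row `a` consists of frozen indices of `A` and `J`
is not a proper relation of `A`, then appending `a` does not change the nullity. -/
theorem nullity_add_frozen_row {F : Type*} [Field F] [Fintype F]
    {m n k : ℕ} (A : Matrix (Fin m) (Fin n) F) (A' : Matrix (Fin (m + 1)) (Fin n) F)
    (a : Fin n → F)
    (hsparse : ∀ i : Fin m, ({j | A i j ≠ 0} : Set (Fin n)).ncard ≤ k)
    (hrow : ∀ i : Fin m, A' i.castSucc = A i) (hlast : A' (Fin.last m) = a)
    (hJF : {j | a j ≠ 0} ⊆ FrozenSet A)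
    (hnp : ¬ IsProperRelation A {j | a j ≠ 0}) :
    nulMat A' = nulMat A := by
  have hker : LinearMap.ker A'.mulVecLin = LinearMap.ker A.mulVecLin := by
    ext σ
    simp only [LinearMap.mem_ker, Matrix.mulVecLin_apply]
    constructor
    · intro h
      funext i
      have := congrFun h i.castSucc
      simpa [Matrix.mulVec, hrow i] using this
    · intro h
      funext i
      refine Fin.lastCases ?_ (fun i => ?_) i
      · show Matrix.mulVec A' σ (Fin.last m) = 0
        simp only [Matrix.mulVec, dotProduct, hlast]
        apply Finset.sum_eq_zero
        intro j _
        by_cases hj : a j = 0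
        · simp [hj]
        · have : σ j = 0 := hJF hj σ h
          simp [this]
      · have := congrFun h i
        simpa [Matrix.mulVec, hrow i] using this
  rw [nulMat, nulMat, hker]
end
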